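/- arXiv:0810.1363 — 4 statements merged into one kernel-verified Lean document; each statement's English description precedes it below -/
import Mathlib

section
/- Let V be a real inner product space with 3 ≤ dim V < ∞, let y ∈ V with y ≠ 0, and let α₁, …, α₁₀ ∈ ℝ. Suppose that for all x₁, x₂, x₃ ∈ V: α₁⟨x₂,x₃⟩x₁ + α₂⟨x₁,x₃⟩x₂ + α₃⟨x₁,x₂⟩x₃ + α₄⟨y,x₁⟩⟨y,x₂⟩x₃ + α₅⟨y,x₁⟩⟨y,x₃⟩x₂ + α₆⟨y,x₂⟩⟨y,x₃⟩x₁ + α₇⟨x₂,x₃⟩⟨y,x₁⟩y + α₈⟨x₁,x₃⟩⟨y,x₂⟩y + α₉⟨x₁,x₂⟩⟨y,x₃⟩y + α₁₀⟨y,x₁⟩⟨y,x₂⟩⟨y,x₃⟩y = 0. Then α₁ = α₂ = ⋯ = α₁₀ = 0. -/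
open RealInnerProductSpace

theorem exists_orth_pair {V : Type*} [NormedAddCommGroup V] [InnerProductSpace ℝ V]
    [FiniteDimensional ℝ V] (hdim : 3 ≤ Module.finrank ℝ V) (y : V) (hy : y ≠ 0) :
    ∃ u v : V, ⟪u,u⟫ = 1 ∧ ⟪v,v⟫ = 1 ∧ ⟪u,v⟫ = 0 ∧ ⟪y,u⟫ = 0 ∧ ⟪y,v⟫ = 0 := by
  have hrank : 2 ≤ Module.finrank ℝ (ℝ ∙ y)ᗮ := by
    have h1 : Module.finrank ℝ (ℝ ∙ y) = 1 := finrank_span_singleton hy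
    have h2 := Submodule.finrank_add_finrank_orthogonal (K := ℝ ∙ y)
    omega
  set b := stdOrthonormalBasis ℝ (ℝ ∙ y)ᗮ with hbdef
  have hb := b.orthonormal
  set i0 : Fin (Module.finrank ℝ (ℝ ∙ y)ᗮ) := ⟨0, by omega⟩
  set i1 : Fin (Module.finrank ℝ (ℝ ∙ y)ᗮ) := ⟨1, by omega⟩
  refine ⟨b i0, b i1, ?_, ?_, ?_, ?_, ?_⟩
  · rw [real_inner_self_eq_norm_sq]
    have := hb.1 i0
    rw [Submodule.norm_coe] at *
    rw [this]; norm_num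
  · rw [real_inner_self_eq_norm_sq]
    have := hb.1 i1
    rw [Submodule.norm_coe] at *
    rw [this]; norm_num
  · have := hb.2 (i := i0) (j := i1) (by simp [i0, i1])
    rw [← Submodule.coe_inner]
    exact this
  · exact Submodule.inner_right_of_mem_orthogonal (Submodule.mem_span_singleton_self y) (b i0).2
  · exact Submodule.inner_right_of_mem_orthogonal (Submodule.mem_span_singleton_self y) (b i1).2

/-- Pointwise form of Lemma 2: in a real inner product space `V` with `3 ≤ dim V < ∞`,
for a fixed nonzero `y`, the vanishing of the displayed combination for all `x₁, x₂, x₃`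
forces all ten coefficients `α₁, …, α₁₀` to vanish. -/
theorem lemma2_pointwise {V : Type*} [NormedAddCommGroup V] [InnerProductSpace ℝ V]
    [FiniteDimensional ℝ V] (hdim : 3 ≤ Module.finrank ℝ V)
    (y : V) (hy : y ≠ 0) (α₁ α₂ α₃ α₄ α₅ α₆ α₇ α₈ α₉ α₁₀ : ℝ)
    (h : ∀ x₁ x₂ x₃ : V,
      (α₁ * ⟪x₂, x₃⟫) • x₁ + (α₂ * ⟪x₁, x₃⟫) • x₂ + (α₃ * ⟪x₁, x₂⟫) • x₃ +
      (α₄ * (⟪y, x₁⟫ * ⟪y, x₂⟫)) • x₃ + (α₅ * (⟪y, x₁⟫ * ⟪y, x₃⟫)) • x₂ +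
      (α₆ * (⟪y, x₂⟫ * ⟪y, x₃⟫)) • x₁ + (α₇ * (⟪x₂, x₃⟫ * ⟪y, x₁⟫)) • y +
      (α₈ * (⟪x₁, x₃⟫ * ⟪y, x₂⟫)) • y + (α₉ * (⟪x₁, x₂⟫ * ⟪y, x₃⟫)) • y +
      (α₁₀ * (⟪y, x₁⟫ * ⟪y, x₂⟫ * ⟪y, x₃⟫)) • y = 0) :
    α₁ = 0 ∧ α₂ = 0 ∧ α₃ = 0 ∧ α₄ = 0 ∧ α₅ = 0 ∧
    α₆ = 0 ∧ α₇ = 0 ∧ α₈ = 0 ∧ α₉ = 0 ∧ α₁₀ = 0 := by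
  obtain ⟨u, v, huu, hvv, huv, hyu, hyv⟩ := exists_orth_pair hdim y hy
  have hvu : ⟪v,u⟫ = (0:ℝ) := by rw [real_inner_comm]; exact huv
  have huy : ⟪u,y⟫ = (0:ℝ) := by rw [real_inner_comm]; exact hyu
  have hvy : ⟪v,y⟫ = (0:ℝ) := by rw [real_inner_comm]; exact hyv
  have hu0 : u ≠ 0 := by
    intro H; rw [H] at huu; simp at huu
  have hv0 : v ≠ 0 := by
    intro H; rw [H] at hvv; simp at hvv
  have hc : ⟪y,y⟫ ≠ (0:ℝ) := fun H => hy (inner_self_eq_zero.mp H)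
  have hα₁ : α₁ = 0 := by
    have h1 := h u v v
    simp [huu, hvv, huv, hvu, hyu, hyv, huy, hvy, hu0, hv0] at h1
    tauto
  have hα₂ : α₂ = 0 := by
    have h1 := h v u v
    simp [huu, hvv, huv, hvu, hyu, hyv, huy, hvy, hu0, hv0] at h1
    tauto
  have hα₃ : α₃ = 0 := by
    have h1 := h u u v
    simp [huu, hvv, huv, hvu, hyu, hyv, huy, hvy, hu0, hv0] at h1
    tauto
  have hα₄ : α₄ = 0 := by
    have h1 := h y y u
    simp [huu, hvv, huv, hvu, hyu, hyv, huy, hvy, hu0, hv0, hα₁, hα₂, hα₃, hc] at h1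
    tauto
  have hα₅ : α₅ = 0 := by
    have h1 := h y u y
    simp [huu, hvv, huv, hvu, hyu, hyv, huy, hvy, hu0, hv0, hα₁, hα₂, hα₃, hc] at h1
    tauto
  have hα₆ : α₆ = 0 := by
    have h1 := h u y y
    simp [huu, hvv, huv, hvu, hyu, hyv, huy, hvy, hu0, hv0, hα₁, hα₂, hα₃, hc] at h1
    tauto
  have hα₇ : α₇ = 0 := by
    have h1 := h y u u
    simp [huu, hvv, huv, hvu, hyu, hyv, huy, hvy, hu0, hv0, hy, hα₁, hα₂, hα₃, hα₄, hα₅, hα₆, hc] at h1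
    tauto
  have hα₈ : α₈ = 0 := by
    have h1 := h u y u
    simp [huu, hvv, huv, hvu, hyu, hyv, huy, hvy, hu0, hv0, hy, hα₁, hα₂, hα₃, hα₄, hα₅, hα₆, hc] at h1
    tauto
  have hα₉ : α₉ = 0 := by
    have h1 := h u u y
    simp [huu, hvv, huv, hvu, hyu, hyv, huy, hvy, hu0, hv0, hy, hα₁, hα₂, hα₃, hα₄, hα₅, hα₆, hc] at h1
    tauto
  have hα₁₀ : α₁₀ = 0 := by
    have h1 := h y y y
    simp [hy, hα₁, hα₂, hα₃, hα₄, hα₅, hα₆, hα₇, hα₈, hα₉, hc] at h1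
    tauto
  exact ⟨hα₁, hα₂, hα₃, hα₄, hα₅, hα₆, hα₇, hα₈, hα₉, hα₁₀⟩
end

section
/- Let V be a real inner product space with 3 ≤ dim V < ∞, and let α₁, …, α₁₀ : [0, ∞) → ℝ be continuous functions. Suppose that for every y ∈ V and all x₁, x₂, x₃ ∈ V, writing t = ‖y‖²/2: α₁(t)⟨x₂,x₃⟩x₁ + α₂(t)⟨x₁,x₃⟩x₂ + α₃(t)⟨x₁,x₂⟩x₃ + α₄(t)⟨y,x₁⟩⟨y,x₂⟩x₃ + α₅(t)⟨y,x₁⟩⟨y,x₃⟩x₂ + α₆(t)⟨y,x₂⟩⟨y,x₃⟩x₁ + α₇(t)⟨x₂,x₃⟩⟨y,x₁⟩y + α₈(t)⟨x₁,x₃⟩⟨y,x₂⟩y + α₉(t)⟨x₁,x₂⟩⟨y,x₃⟩y + α₁₀(t)⟨y,x₁⟩⟨y,x₂⟩⟨y,x₃⟩y = 0. Then α₁, …, α₁₀ all vanish identically on [0, ∞). -/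
/-!
Fix orthonormal `e₀, e₁, e₂` and take `y = s • e₀` with `s² = 2t`. Pairing the tensor, evaluated
on a triple of basis vectors, with a basis vector isolates the coefficients one at a time:
`α₁, α₂, α₃` directly, then `s² α₄, …, s² α₉`, and finally `s⁴ α₁₀`. This settles `t > 0`; at
`t = 0` the vector `y` vanishes and only continuity can see `α₄, …, α₁₀`.
-/

open RealInnerProductSpace Set

section TensorCombination

variable {V : Type*} [NormedAddCommGroup V] [InnerProductSpace ℝ V]

/-- The paper's M-tensor with its coefficients evaluated at one fixed energy density. -/
def tensorCombination (a₁ a₂ a₃ a₄ a₅ a₆ a₇ a₈ a₉ a₁₀ : ℝ) (y x₁ x₂ x₃ : V) : V :=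
  (a₁ * ⟪x₂, x₃⟫) • x₁ + (a₂ * ⟪x₁, x₃⟫) • x₂ + (a₃ * ⟪x₁, x₂⟫) • x₃ +
    (a₄ * (⟪y, x₁⟫ * ⟪y, x₂⟫)) • x₃ + (a₅ * (⟪y, x₁⟫ * ⟪y, x₃⟫)) • x₂ +
    (a₆ * (⟪y, x₂⟫ * ⟪y, x₃⟫)) • x₁ + (a₇ * (⟪x₂, x₃⟫ * ⟪y, x₁⟫)) • y +
    (a₈ * (⟪x₁, x₃⟫ * ⟪y, x₂⟫)) • y + (a₉ * (⟪x₁, x₂⟫ * ⟪y, x₃⟫)) • y +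
    (a₁₀ * (⟪y, x₁⟫ * ⟪y, x₂⟫ * ⟪y, x₃⟫)) • y

variable {a₁ a₂ a₃ a₄ a₅ a₆ a₇ a₈ a₉ a₁₀ s : ℝ} {e : Fin 3 → V}

theorem tensorCombination_metric_coeffs_eq_zero (he : Orthonormal ℝ e)
    (h : ∀ x₁ x₂ x₃ : V, tensorCombination a₁ a₂ a₃ a₄ a₅ a₆ a₇ a₈ a₉ a₁₀ (s • e 0) x₁ x₂ x₃ = 0) :
    a₁ = 0 ∧ a₂ = 0 ∧ a₃ = 0 := by
  have hee := orthonormal_iff_ite.mp he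
  have H₁ := congrArg (⟪·, e 1⟫) (h (e 1) (e 2) (e 2))
  have H₂ := congrArg (⟪·, e 1⟫) (h (e 2) (e 1) (e 2))
  have H₃ := congrArg (⟪·, e 1⟫) (h (e 2) (e 2) (e 1))
  simp only [tensorCombination, inner_add_left, real_inner_smul_left, hee] at H₁ H₂ H₃
  norm_num [Fin.ext_iff] at H₁ H₂ H₃
  exact ⟨H₁, H₂, H₃⟩

theorem tensorCombination_coeffs_eq_zero (he : Orthonormal ℝ e) (hs : s ≠ 0)
    (h : ∀ x₁ x₂ x₃ : V, tensorCombination a₁ a₂ a₃ a₄ a₅ a₆ a₇ a₈ a₉ a₁₀ (s • e 0) x₁ x₂ x₃ = 0) :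
    a₁ = 0 ∧ a₂ = 0 ∧ a₃ = 0 ∧ a₄ = 0 ∧ a₅ = 0 ∧
      a₆ = 0 ∧ a₇ = 0 ∧ a₈ = 0 ∧ a₉ = 0 ∧ a₁₀ = 0 := by
  obtain ⟨h₁, h₂, h₃⟩ := tensorCombination_metric_coeffs_eq_zero he h
  have hee := orthonormal_iff_ite.mp he
  have H₄ := congrArg (⟪·, e 1⟫) (h (e 0) (e 0) (e 1))
  have H₅ := congrArg (⟪·, e 1⟫) (h (e 0) (e 1) (e 0))
  have H₆ := congrArg (⟪·, e 1⟫) (h (e 1) (e 0) (e 0))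
  have H₇ := congrArg (⟪·, e 0⟫) (h (e 0) (e 1) (e 1))
  have H₈ := congrArg (⟪·, e 0⟫) (h (e 1) (e 0) (e 1))
  have H₉ := congrArg (⟪·, e 0⟫) (h (e 1) (e 1) (e 0))
  have H₁₀ := congrArg (⟪·, e 0⟫) (h (e 0) (e 0) (e 0))
  simp only [tensorCombination, inner_add_left, real_inner_smul_left, hee] at H₄ H₅ H₆ H₇ H₈ H₉ H₁₀
  norm_num [Fin.ext_iff, h₁, h₂, h₃, hs] at H₄ H₅ H₆ H₇ H₈ H₉
  subst h₁ h₂ h₃ H₄ H₅ H₆ H₇ H₈ H₉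
  norm_num [hs] at H₁₀
  exact ⟨rfl, rfl, rfl, rfl, rfl, rfl, rfl, rfl, rfl, H₁₀⟩

end TensorCombination

theorem exists_orthonormal_fin_three {V : Type*} [NormedAddCommGroup V] [InnerProductSpace ℝ V]
    [FiniteDimensional ℝ V] (hdim : 3 ≤ Module.finrank ℝ V) : ∃ e : Fin 3 → V, Orthonormal ℝ e :=
  ⟨_, (stdOrthonormalBasis ℝ V).orthonormal.comp _ (Fin.castLE_injective hdim)⟩

theorem eqOn_zero_Ici_of_eqOn_zero_Ioi {f : ℝ → ℝ} (hf : ContinuousOn f (Ici 0))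
    (h : EqOn f 0 (Ioi 0)) : EqOn f 0 (Ici 0) :=
  h.of_subset_closure hf continuousOn_const Ioi_subset_Ici_self (closure_Ioi (0 : ℝ)).ge

theorem lemma2_functions_general {V : Type*} [NormedAddCommGroup V] [InnerProductSpace ℝ V]
    [FiniteDimensional ℝ V] (hdim : 3 ≤ Module.finrank ℝ V)
    (α₁ α₂ α₃ α₄ α₅ α₆ α₇ α₈ α₉ α₁₀ : ℝ → ℝ)
    (h₄ : ContinuousOn α₄ (Set.Ici 0))
    (h₅ : ContinuousOn α₅ (Set.Ici 0)) (h₆ : ContinuousOn α₆ (Set.Ici 0))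
    (h₇ : ContinuousOn α₇ (Set.Ici 0)) (h₈ : ContinuousOn α₈ (Set.Ici 0))
    (h₉ : ContinuousOn α₉ (Set.Ici 0)) (h₁₀ : ContinuousOn α₁₀ (Set.Ici 0))
    (h : ∀ y x₁ x₂ x₃ : V,
      (α₁ (‖y‖ ^ 2 / 2) * ⟪x₂, x₃⟫) • x₁ + (α₂ (‖y‖ ^ 2 / 2) * ⟪x₁, x₃⟫) • x₂ +
      (α₃ (‖y‖ ^ 2 / 2) * ⟪x₁, x₂⟫) • x₃ +
      (α₄ (‖y‖ ^ 2 / 2) * (⟪y, x₁⟫ * ⟪y, x₂⟫)) • x₃ +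
      (α₅ (‖y‖ ^ 2 / 2) * (⟪y, x₁⟫ * ⟪y, x₃⟫)) • x₂ +
      (α₆ (‖y‖ ^ 2 / 2) * (⟪y, x₂⟫ * ⟪y, x₃⟫)) • x₁ +
      (α₇ (‖y‖ ^ 2 / 2) * (⟪x₂, x₃⟫ * ⟪y, x₁⟫)) • y +
      (α₈ (‖y‖ ^ 2 / 2) * (⟪x₁, x₃⟫ * ⟪y, x₂⟫)) • y +
      (α₉ (‖y‖ ^ 2 / 2) * (⟪x₁, x₂⟫ * ⟪y, x₃⟫)) • y +
      (α₁₀ (‖y‖ ^ 2 / 2) * (⟪y, x₁⟫ * ⟪y, x₂⟫ * ⟪y, x₃⟫)) • y = 0) :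
    ∀ t ∈ Set.Ici (0 : ℝ),
      α₁ t = 0 ∧ α₂ t = 0 ∧ α₃ t = 0 ∧ α₄ t = 0 ∧ α₅ t = 0 ∧
      α₆ t = 0 ∧ α₇ t = 0 ∧ α₈ t = 0 ∧ α₉ t = 0 ∧ α₁₀ t = 0 := by
  obtain ⟨e, he⟩ := exists_orthonormal_fin_three hdim
  have hy (t : ℝ) (ht : 0 ≤ t) : ‖√(2 * t) • e 0‖ ^ 2 / 2 = t := by
    rw [norm_smul, he.1, mul_one, Real.norm_eq_abs, sq_abs, Real.sq_sqrt (by linarith)]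
    ring
  have hT (t : ℝ) (ht : 0 ≤ t) (x₁ x₂ x₃ : V) :
      tensorCombination (α₁ t) (α₂ t) (α₃ t) (α₄ t) (α₅ t) (α₆ t) (α₇ t) (α₈ t) (α₉ t) (α₁₀ t)
        (√(2 * t) • e 0) x₁ x₂ x₃ = 0 := by
    have := h (√(2 * t) • e 0) x₁ x₂ x₃
    rwa [hy t ht] at this
  have hpos : ∀ t > 0, α₁ t = 0 ∧ α₂ t = 0 ∧ α₃ t = 0 ∧ α₄ t = 0 ∧ α₅ t = 0 ∧
      α₆ t = 0 ∧ α₇ t = 0 ∧ α₈ t = 0 ∧ α₉ t = 0 ∧ α₁₀ t = 0 := fun t ht =>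
    tensorCombination_coeffs_eq_zero he (by positivity) (hT t ht.le)
  simp only [imp_and, forall_and] at hpos
  obtain ⟨-, -, -, h₄', h₅', h₆', h₇', h₈', h₉', h₁₀'⟩ := hpos
  intro t ht
  obtain ⟨h₁t, h₂t, h₃t⟩ := tensorCombination_metric_coeffs_eq_zero he (hT t ht)
  have hcont {f : ℝ → ℝ} (hf : ContinuousOn f (Ici 0)) (hf' : ∀ t > 0, f t = 0) : f t = 0 :=
    eqOn_zero_Ici_of_eqOn_zero_Ioi hf hf' ht
  exact ⟨h₁t, h₂t, h₃t, hcont h₄ h₄', hcont h₅ h₅', hcont h₆ h₆', hcont h₇ h₇', hcont h₈ h₈',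
    hcont h₉ h₉', hcont h₁₀ h₁₀'⟩

/-- Lemma 2 of the paper (function form): if `α₁, …, α₁₀ : [0,∞) → ℝ` are continuous and
the displayed combination (with `t = ‖y‖²/2`) vanishes for all `y, x₁, x₂, x₃` in a real
inner product space `V` with `3 ≤ dim V < ∞`, then all ten functions vanish on `[0,∞)`. -/
theorem lemma2_functions {V : Type*} [NormedAddCommGroup V] [InnerProductSpace ℝ V]
    [FiniteDimensional ℝ V] (hdim : 3 ≤ Module.finrank ℝ V)
    (α₁ α₂ α₃ α₄ α₅ α₆ α₇ α₈ α₉ α₁₀ : ℝ → ℝ)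
    (h₁ : ContinuousOn α₁ (Set.Ici 0)) (h₂ : ContinuousOn α₂ (Set.Ici 0))
    (h₃ : ContinuousOn α₃ (Set.Ici 0)) (h₄ : ContinuousOn α₄ (Set.Ici 0))
    (h₅ : ContinuousOn α₅ (Set.Ici 0)) (h₆ : ContinuousOn α₆ (Set.Ici 0))
    (h₇ : ContinuousOn α₇ (Set.Ici 0)) (h₈ : ContinuousOn α₈ (Set.Ici 0))
    (h₉ : ContinuousOn α₉ (Set.Ici 0)) (h₁₀ : ContinuousOn α₁₀ (Set.Ici 0))
    (h : ∀ y x₁ x₂ x₃ : V,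
      (α₁ (‖y‖ ^ 2 / 2) * ⟪x₂, x₃⟫) • x₁ + (α₂ (‖y‖ ^ 2 / 2) * ⟪x₁, x₃⟫) • x₂ +
      (α₃ (‖y‖ ^ 2 / 2) * ⟪x₁, x₂⟫) • x₃ +
      (α₄ (‖y‖ ^ 2 / 2) * (⟪y, x₁⟫ * ⟪y, x₂⟫)) • x₃ +
      (α₅ (‖y‖ ^ 2 / 2) * (⟪y, x₁⟫ * ⟪y, x₃⟫)) • x₂ +
      (α₆ (‖y‖ ^ 2 / 2) * (⟪y, x₂⟫ * ⟪y, x₃⟫)) • x₁ +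
      (α₇ (‖y‖ ^ 2 / 2) * (⟪x₂, x₃⟫ * ⟪y, x₁⟫)) • y +
      (α₈ (‖y‖ ^ 2 / 2) * (⟪x₁, x₃⟫ * ⟪y, x₂⟫)) • y +
      (α₉ (‖y‖ ^ 2 / 2) * (⟪x₁, x₂⟫ * ⟪y, x₃⟫)) • y +
      (α₁₀ (‖y‖ ^ 2 / 2) * (⟪y, x₁⟫ * ⟪y, x₂⟫ * ⟪y, x₃⟫)) • y = 0) :
    ∀ t ∈ Set.Ici (0 : ℝ),
      α₁ t = 0 ∧ α₂ t = 0 ∧ α₃ t = 0 ∧ α₄ t = 0 ∧ α₅ t = 0 ∧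
      α₆ t = 0 ∧ α₇ t = 0 ∧ α₈ t = 0 ∧ α₉ t = 0 ∧ α₁₀ t = 0 :=
  lemma2_functions_general hdim α₁ α₂ α₃ α₄ α₅ α₆ α₇ α₈ α₉ α₁₀ h₄ h₅ h₆ h₇ h₈ h₉ h₁₀ h
end

section
/- Let n ≥ 1, let g be a real symmetric positive-definite n×n matrix with inverse g⁻¹, let y ∈ ℝⁿ, set a = g·y and t = (1/2)·yᵀ·g·y. Let c₁, c₂, c₃, d₁, d₂, d₃ ∈ ℝ satisfy c₁c₂ − c₃² ≠ 0, c₂ + 2d₂t ≠ 0, and Δ := (c₁+2d₁t)(c₂+2d₂t) − (c₃+2d₃t)² ≠ 0. Define the n×n matrices G_α = c_α·g + d_α·(a·aᵀ) for α = 1, 2, 3, and H_α = p_α·g⁻¹ + q_α·(y·yᵀ) for α = 1, 2, 3, where p₁ = c₂/(c₁c₂−c₃²), p₂ = c₁/(c₁c₂−c₃²), p₃ = −c₃/(c₁c₂−c₃²), q₁ = −(c₂d₁p₁ − c₃d₃p₁ − c₃d₂p₃ + c₂d₃p₃ + 2d₁d₂p₁t − 2d₃²p₁t)/Δ, q₂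 = −(d₂p₂ + d₃p₃)/(c₂+2d₂t) + (c₃+2d₃t)·[(d₃p₁ + d₂p₃)(c₁+2d₁t) − (d₁p₁ + d₃p₃)(c₃+2d₃t)] / ((c₂+2d₂t)·Δ), and q₃ = −[(d₃p₁ + d₂p₃)(c₁+2d₁t) − (d₁p₁ + d₃p₃)(c₃+2d₃t)]/Δ. Then G₁H₁ + G₃H₃ = I_n, G₁H₃ + G₃H₂ = 0, G₃H₁ + G₂H₃ = 0, and G₃H₃ + G₂H₂ = I_n; equivalently, the symmetric 2n×2n block matrix [[G₁, G₃], [G₃, G₂]] is invertible with inverse the block matrix [[H₁, H₃], [H₃, H₂]]. -/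
/-!
In the adapted frame every block has the form `c • g + d • (g Y g)` or `p • g⁻¹ + q • Y` with
`Y = y yᵀ`, and since `Y g Y = 2t • Y` these matrices span an algebra with basis `1, g Y`.
A product `(c • g + d • g Y g) (p • g⁻¹ + q • Y)` equals `c p • 1 + ((c + 2t d) q + d p) • g Y`,
so the block identities reduce to the 2 × 2 scalar identities `C P = 1` and `(C + 2t D) Q + D P = 0`
for the coefficient matrices `C = (cα)`, `D = (dα)`, `P = (pα)`, `Q = (qα)`; the paper's `pα`
give `P = C⁻¹`, and its `qα` solve the second system by Cramer's rule.
-/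

open Matrix

section Algebra

variable {K R : Type*} [CommRing K] [Ring R] [Algebra K R]

theorem smul_add_smul_mul_smul_add_smul {g g' Y : R} {s : K} (hg : g * g' = 1)
    (hY : Y * g * Y = s • Y) (c d p q : K) :
    (c • g + d • (g * Y * g)) * (p • g' + q • Y)
      = (c * p) • 1 + ((c + s * d) * q + d * p) • (g * Y) := by
  have hgYgg' : g * Y * g * g' = g * Y := by rw [mul_assoc, hg, mul_one]
  have hgYgY : g * Y * g * Y = s • (g * Y) := by
    rw [mul_assoc, mul_assoc, ← mul_assoc Y, hY, mul_smul_comm]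
  rw [add_mul, mul_add, mul_add, smul_mul_smul_comm, smul_mul_smul_comm, smul_mul_smul_comm,
    smul_mul_smul_comm, hg, hgYgg', hgYgY]
  module

theorem smul_add_smul_mul_add_eq_smul_one {g g' Y : R} {s : K} (hg : g * g' = 1)
    (hY : Y * g * Y = s • Y) {c d p q c' d' p' q' e : K} (hC : c * p + c' * p' = e)
    (hD : (c + s * d) * q + (c' + s * d') * q' + (d * p + d' * p') = 0) :
    (c • g + d • (g * Y * g)) * (p • g' + q • Y)
      + (c' • g + d' • (g * Y * g)) * (p' • g' + q' • Y) = e • 1 := by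
  rw [smul_add_smul_mul_smul_add_smul hg hY, smul_add_smul_mul_smul_add_smul hg hY,
    add_add_add_comm, ← add_smul, ← add_smul, hC, add_add_add_comm, hD, zero_smul, add_zero]

end Algebra

namespace Matrix

variable {l m n o α : Type*} [CommSemiring α] [Fintype m] [Fintype n]

theorem mul_vecMulVec_mul (M : Matrix l m α) (x : m → α) (y : n → α) (N : Matrix n o α) :
    M * vecMulVec x y * N = vecMulVec (M *ᵥ x) (Nᵀ *ᵥ y) := by
  rw [mul_vecMulVec, vecMulVec_mul, mulVec_transpose]

theorem vecMulVec_mul_mul_vecMulVec (u : l → α) (v : m → α) (M : Matrix m n α) (w : n → α)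
    (x : o → α) : vecMulVec u v * M * vecMulVec w x = (v ⬝ᵥ M *ᵥ w) • vecMulVec u x := by
  rw [vecMulVec_mul, vecMulVec_mul_vecMulVec, vecMulVec_smul, dotProduct_mulVec]

end Matrix

section Coefficients

variable {K : Type*} [Field K]

theorem c_mul_p_eq_one {c₁ c₂ c₃ p₁ p₂ p₃ : K} (h1 : c₁ * c₂ - c₃ ^ 2 ≠ 0)
    (hp₁ : p₁ = c₂ / (c₁ * c₂ - c₃ ^ 2))
    (hp₂ : p₂ = c₁ / (c₁ * c₂ - c₃ ^ 2))
    (hp₃ : p₃ = -c₃ / (c₁ * c₂ - c₃ ^ 2)) :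
    c₁ * p₁ + c₃ * p₃ = 1 ∧ c₁ * p₃ + c₃ * p₂ = 0 ∧
    c₃ * p₁ + c₂ * p₃ = 0 ∧ c₃ * p₃ + c₂ * p₂ = 1 := by
  subst hp₁ hp₂ hp₃
  refine ⟨?_, ?_, ?_, ?_⟩ <;> field_simp <;> ring

theorem c_add_d_mul_q_add_d_mul_p_eq_zero {t c₁ c₂ c₃ d₁ d₂ d₃ Δ p₁ p₂ p₃ q₁ q₂ q₃ : K}
    (h2 : c₂ + 2 * d₂ * t ≠ 0)
    (hΔdef : Δ = (c₁ + 2 * d₁ * t) * (c₂ + 2 * d₂ * t) - (c₃ + 2 * d₃ * t) ^ 2)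
    (hΔ : Δ ≠ 0)
    (hp₁ : p₁ = c₂ / (c₁ * c₂ - c₃ ^ 2))
    (hp₂ : p₂ = c₁ / (c₁ * c₂ - c₃ ^ 2))
    (hp₃ : p₃ = -c₃ / (c₁ * c₂ - c₃ ^ 2))
    (hq₁ : q₁ = -(c₂ * d₁ * p₁ - c₃ * d₃ * p₁ - c₃ * d₂ * p₃ + c₂ * d₃ * p₃
        + 2 * d₁ * d₂ * p₁ * t - 2 * d₃ ^ 2 * p₁ * t) / Δ)
    (hq₂ : q₂ = -(d₂ * p₂ + d₃ * p₃) / (c₂ + 2 * d₂ * t)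
        + (c₃ + 2 * d₃ * t) * ((d₃ * p₁ + d₂ * p₃) * (c₁ + 2 * d₁ * t)
            - (d₁ * p₁ + d₃ * p₃) * (c₃ + 2 * d₃ * t)) / ((c₂ + 2 * d₂ * t) * Δ))
    (hq₃ : q₃ = -((d₃ * p₁ + d₂ * p₃) * (c₁ + 2 * d₁ * t)
        - (d₁ * p₁ + d₃ * p₃) * (c₃ + 2 * d₃ * t)) / Δ) :
    (c₁ + 2 * t * d₁) * q₁ + (c₃ + 2 * t * d₃) * q₃ + (d₁ * p₁ + d₃ * p₃) = 0 ∧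
    (c₁ + 2 * t * d₁) * q₃ + (c₃ + 2 * t * d₃) * q₂ + (d₁ * p₃ + d₃ * p₂) = 0 ∧
    (c₃ + 2 * t * d₃) * q₁ + (c₂ + 2 * t * d₂) * q₃ + (d₃ * p₁ + d₂ * p₃) = 0 ∧
    (c₃ + 2 * t * d₃) * q₃ + (c₂ + 2 * t * d₂) * q₂ + (d₃ * p₃ + d₂ * p₂) = 0 := by
  have hq₁' : Δ * q₁ = -((c₂ + 2 * d₂ * t) * (d₁ * p₁ + d₃ * p₃)
      - (c₃ + 2 * d₃ * t) * (d₃ * p₁ + d₂ * p₃)) := by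
    rw [hq₁, mul_div_cancel₀ _ hΔ]; ring
  have hq₃' : Δ * q₃ = -((c₁ + 2 * d₁ * t) * (d₃ * p₁ + d₂ * p₃)
      - (c₃ + 2 * d₃ * t) * (d₁ * p₁ + d₃ * p₃)) := by
    rw [hq₃, mul_div_cancel₀ _ hΔ]; ring
  have hq₂' : (c₃ + 2 * d₃ * t) * q₃ + (c₂ + 2 * d₂ * t) * q₂ + (d₃ * p₃ + d₂ * p₂) = 0 := by
    rw [hq₂, hq₃]
    generalize c₂ + 2 * d₂ * t = m₂ at h2 ⊢
    field_simp
    ring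
  -- `adj (C + 2t D) * D * C⁻¹` is symmetric, so the one `q₃` fits both off-diagonal equations.
  have hsymm : (c₂ + 2 * d₂ * t) * (d₁ * p₃ + d₃ * p₂) - (c₃ + 2 * d₃ * t) * (d₃ * p₃ + d₂ * p₂)
      = (c₁ + 2 * d₁ * t) * (d₃ * p₁ + d₂ * p₃) - (c₃ + 2 * d₃ * t) * (d₁ * p₁ + d₃ * p₃) := by
    rw [hp₁, hp₂, hp₃]; field_simp; ring
  refine ⟨mul_left_cancel₀ hΔ ?_, mul_left_cancel₀ h2 ?_, mul_left_cancel₀ hΔ ?_, ?_⟩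
  · linear_combination (c₁ + 2 * d₁ * t) * hq₁' + (c₃ + 2 * d₃ * t) * hq₃'
      + (d₁ * p₁ + d₃ * p₃) * hΔdef
  · linear_combination (c₃ + 2 * d₃ * t) * hq₂' + hq₃' + hsymm - q₃ * hΔdef
  · linear_combination (c₃ + 2 * d₃ * t) * hq₁' + (c₂ + 2 * d₂ * t) * hq₃'
      + (d₃ * p₁ + d₂ * p₃) * hΔdef
  · linear_combination hq₂'

end Coefficients

theorem inverse_metric_blocks_general {n : ℕ}
    (g : Matrix (Fin n) (Fin n) ℝ) (hg : g.PosDef)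
    (y : Fin n → ℝ) (a : Fin n → ℝ) (ha : a = g.mulVec y)
    (t : ℝ) (ht : t = (1 / 2) * (y ⬝ᵥ g.mulVec y))
    (c₁ c₂ c₃ d₁ d₂ d₃ : ℝ)
    (h1 : c₁ * c₂ - c₃ ^ 2 ≠ 0) (h2 : c₂ + 2 * d₂ * t ≠ 0)
    (Δ : ℝ)
    (hΔdef : Δ = (c₁ + 2 * d₁ * t) * (c₂ + 2 * d₂ * t) - (c₃ + 2 * d₃ * t) ^ 2)
    (hΔ : Δ ≠ 0)
    (p₁ p₂ p₃ q₁ q₂ q₃ : ℝ)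
    (hp₁ : p₁ = c₂ / (c₁ * c₂ - c₃ ^ 2))
    (hp₂ : p₂ = c₁ / (c₁ * c₂ - c₃ ^ 2))
    (hp₃ : p₃ = -c₃ / (c₁ * c₂ - c₃ ^ 2))
    (hq₁ : q₁ = -(c₂ * d₁ * p₁ - c₃ * d₃ * p₁ - c₃ * d₂ * p₃ + c₂ * d₃ * p₃
        + 2 * d₁ * d₂ * p₁ * t - 2 * d₃ ^ 2 * p₁ * t) / Δ)
    (hq₂ : q₂ = -(d₂ * p₂ + d₃ * p₃) / (c₂ + 2 * d₂ * t)
        + (c₃ + 2 * d₃ * t) * ((d₃ * p₁ + d₂ * p₃) * (c₁ + 2 * d₁ * t)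
            - (d₁ * p₁ + d₃ * p₃) * (c₃ + 2 * d₃ * t)) / ((c₂ + 2 * d₂ * t) * Δ))
    (hq₃ : q₃ = -((d₃ * p₁ + d₂ * p₃) * (c₁ + 2 * d₁ * t)
        - (d₁ * p₁ + d₃ * p₃) * (c₃ + 2 * d₃ * t)) / Δ)
    (G₁ G₂ G₃ H₁ H₂ H₃ : Matrix (Fin n) (Fin n) ℝ)
    (hG₁ : G₁ = c₁ • g + d₁ • vecMulVec a a)
    (hG₂ : G₂ = c₂ • g + d₂ • vecMulVec a a)
    (hG₃ : G₃ = c₃ • g + d₃ • vecMulVec a a)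
    (hH₁ : H₁ = p₁ • g⁻¹ + q₁ • vecMulVec y y)
    (hH₂ : H₂ = p₂ • g⁻¹ + q₂ • vecMulVec y y)
    (hH₃ : H₃ = p₃ • g⁻¹ + q₃ • vecMulVec y y) :
    G₁ * H₁ + G₃ * H₃ = 1 ∧ G₁ * H₃ + G₃ * H₂ = 0 ∧
    G₃ * H₁ + G₂ * H₃ = 0 ∧ G₃ * H₃ + G₂ * H₂ = 1 ∧
    fromBlocks G₁ G₃ G₃ G₂ * fromBlocks H₁ H₃ H₃ H₂ = 1 ∧
    fromBlocks H₁ H₃ H₃ H₂ * fromBlocks G₁ G₃ G₃ G₂ = 1 := by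
  have hsym : gᵀ = g := (conjTranspose_eq_transpose_of_trivial g).symm.trans hg.isHermitian.eq
  have hinv : g * g⁻¹ = 1 := mul_nonsing_inv g ((isUnit_iff_isUnit_det g).mp hg.isUnit)
  have hY : vecMulVec y y * g * vecMulVec y y = (2 * t) • vecMulVec y y := by
    rw [vecMulVec_mul_mul_vecMulVec, ht]
    ring_nf
  have hA : vecMulVec a a = g * vecMulVec y y * g := by rw [mul_vecMulVec_mul, hsym, ha]
  obtain ⟨hC₁₁, hC₁₂, hC₂₁, hC₂₂⟩ := c_mul_p_eq_one h1 hp₁ hp₂ hp₃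
  obtain ⟨hD₁₁, hD₁₂, hD₂₁, hD₂₂⟩ :=
    c_add_d_mul_q_add_d_mul_p_eq_zero h2 hΔdef hΔ hp₁ hp₂ hp₃ hq₁ hq₂ hq₃
  have E₁₁ : G₁ * H₁ + G₃ * H₃ = 1 := by
    rw [hG₁, hG₃, hH₁, hH₃, hA, smul_add_smul_mul_add_eq_smul_one hinv hY hC₁₁ hD₁₁, one_smul]
  have E₁₂ : G₁ * H₃ + G₃ * H₂ = 0 := by
    rw [hG₁, hG₃, hH₃, hH₂, hA, smul_add_smul_mul_add_eq_smul_one hinv hY hC₁₂ hD₁₂, zero_smul]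
  have E₂₁ : G₃ * H₁ + G₂ * H₃ = 0 := by
    rw [hG₃, hG₂, hH₁, hH₃, hA, smul_add_smul_mul_add_eq_smul_one hinv hY hC₂₁ hD₂₁, zero_smul]
  have E₂₂ : G₃ * H₃ + G₂ * H₂ = 1 := by
    rw [hG₃, hG₂, hH₃, hH₂, hA, smul_add_smul_mul_add_eq_smul_one hinv hY hC₂₂ hD₂₂, one_smul]
  have hblock : fromBlocks G₁ G₃ G₃ G₂ * fromBlocks H₁ H₃ H₃ H₂ = 1 := by
    rw [fromBlocks_multiply, E₁₁, E₁₂, E₂₁, E₂₂, fromBlocks_one]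
  exact ⟨E₁₁, E₁₂, E₂₁, E₂₂, hblock, mul_eq_one_comm.mp hblock⟩

/-- Equations (4)–(5) of the paper: with the stated formulas for `p₁, p₂, p₃, q₁, q₂, q₃`,
the matrices `Hα = pα·g⁻¹ + qα·(y·yᵀ)` give the inverse of the block matrix
`[[G₁, G₃], [G₃, G₂]]` of the general natural lifted metric, where
`Gα = cα·g + dα·(a·aᵀ)`, `a = g·y`, `t = (1/2)·yᵀ·g·y`. -/
theorem inverse_metric_blocks {n : ℕ} (hn : 1 ≤ n)
    (g : Matrix (Fin n) (Fin n) ℝ) (hg : g.PosDef)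
    (y : Fin n → ℝ) (a : Fin n → ℝ) (ha : a = g.mulVec y)
    (t : ℝ) (ht : t = (1 / 2) * (y ⬝ᵥ g.mulVec y))
    (c₁ c₂ c₃ d₁ d₂ d₃ : ℝ)
    (h1 : c₁ * c₂ - c₃ ^ 2 ≠ 0) (h2 : c₂ + 2 * d₂ * t ≠ 0)
    (Δ : ℝ)
    (hΔdef : Δ = (c₁ + 2 * d₁ * t) * (c₂ + 2 * d₂ * t) - (c₃ + 2 * d₃ * t) ^ 2)
    (hΔ : Δ ≠ 0)
    (p₁ p₂ p₃ q₁ q₂ q₃ : ℝ)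
    (hp₁ : p₁ = c₂ / (c₁ * c₂ - c₃ ^ 2))
    (hp₂ : p₂ = c₁ / (c₁ * c₂ - c₃ ^ 2))
    (hp₃ : p₃ = -c₃ / (c₁ * c₂ - c₃ ^ 2))
    (hq₁ : q₁ = -(c₂ * d₁ * p₁ - c₃ * d₃ * p₁ - c₃ * d₂ * p₃ + c₂ * d₃ * p₃
        + 2 * d₁ * d₂ * p₁ * t - 2 * d₃ ^ 2 * p₁ * t) / Δ)
    (hq₂ : q₂ = -(d₂ * p₂ + d₃ * p₃) / (c₂ + 2 * d₂ * t)
        + (c₃ + 2 * d₃ * t) * ((d₃ * p₁ + d₂ * p₃) * (c₁ + 2 * d₁ * t)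
            - (d₁ * p₁ + d₃ * p₃) * (c₃ + 2 * d₃ * t)) / ((c₂ + 2 * d₂ * t) * Δ))
    (hq₃ : q₃ = -((d₃ * p₁ + d₂ * p₃) * (c₁ + 2 * d₁ * t)
        - (d₁ * p₁ + d₃ * p₃) * (c₃ + 2 * d₃ * t)) / Δ)
    (G₁ G₂ G₃ H₁ H₂ H₃ : Matrix (Fin n) (Fin n) ℝ)
    (hG₁ : G₁ = c₁ • g + d₁ • vecMulVec a a)
    (hG₂ : G₂ = c₂ • g + d₂ • vecMulVec a a)
    (hG₃ : G₃ = c₃ • g + d₃ • vecMulVec a a)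
    (hH₁ : H₁ = p₁ • g⁻¹ + q₁ • vecMulVec y y)
    (hH₂ : H₂ = p₂ • g⁻¹ + q₂ • vecMulVec y y)
    (hH₃ : H₃ = p₃ • g⁻¹ + q₃ • vecMulVec y y) :
    G₁ * H₁ + G₃ * H₃ = 1 ∧ G₁ * H₃ + G₃ * H₂ = 0 ∧
    G₃ * H₁ + G₂ * H₃ = 0 ∧ G₃ * H₃ + G₂ * H₂ = 1 ∧
    fromBlocks G₁ G₃ G₃ G₂ * fromBlocks H₁ H₃ H₃ H₂ = 1 ∧
    fromBlocks H₁ H₃ H₃ H₂ * fromBlocks G₁ G₃ G₃ G₂ = 1 :=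
  inverse_metric_blocks_general g hg y a ha t ht c₁ c₂ c₃ d₁ d₂ d₃ h1 h2 Δ hΔdef hΔ p₁ p₂ p₃ q₁ q₂
    q₃ hp₁ hp₂ hp₃ hq₁ hq₂ hq₃ G₁ G₂ G₃ H₁ H₂ H₃ hG₁ hG₂ hG₃ hH₁ hH₂ hH₃
end

section
/- Let n ≥ 2, let g be a real symmetric positive-definite n×n matrix with inverse g⁻¹, let y ∈ ℝⁿ with y ≠ 0, set a = g·y and t = (1/2)·yᵀ·g·y. Let c₁, c₂, c₃, d₁, d₂, d₃ ∈ ℝ satisfy c₁c₂ − c₃² ≠ 0, c₂ + 2d₂t ≠ 0, and (c₁+2d₁t)(c₂+2d₂t) − (c₃+2d₃t)² ≠ 0, and define G_α = c_α·g + d_α·(a·aᵀ) for α = 1, 2, 3. Then the symmetric 2n×2n block matrix [[G₁, G₃], [G₃, G₂]] is invertible, and there exist unique real numbers p₁, p₂, p₃, q₁, q₂, q₃ such that its inverse is the block matrix [[H₁, H₃], [H₃, H₂]] with H_α = p_α·g⁻¹ + q_α·(y·yᵀ) for α = 1, 2, 3. -/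
/-!
Put `a = g y` and `s = yᵀ g y = 2t > 0`. The matrix `E = s⁻¹ a yᵀ` is idempotent, with trace `1`
and (as `n ≥ 2`) determinant `0`, so `(u, v) ↦ u (1 - E) + v E` embeds `ℝ × ℝ` into the matrices.
Since `a aᵀ = s E g` and `y yᵀ = s g⁻¹ E`, the blocks factor as `G_α = (c_α, c_α + s d_α) g`, and a
natural block `p g⁻¹ + q y yᵀ` is `g⁻¹ (p, p + s q)`. Inverting the metric thus amounts to
inverting the symmetric `2 × 2` matrix with entries `C_α = (c_α, c_α + s d_α)` over the commutative
ring `ℝ × ℝ`, whose determinant `(c₁c₂ - c₃², (c₁ + s d₁)(c₂ + s d₂) - (c₃ + s d₃)²)` is a unit;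
uniqueness of the coefficients is injectivity of the embedding.
-/

open Matrix

namespace IsIdempotentElem

variable {K R : Type*} [CommRing K] [Ring R] [Algebra K R] {e : R}

def prodAlgHom (he : IsIdempotentElem e) : K × K →ₐ[K] R where
  toFun x := x.1 • (1 - e) + x.2 • e
  map_one' := by simp
  map_mul' x y := by
    simp only [Prod.fst_mul, Prod.snd_mul, add_mul, mul_add, smul_mul_smul_comm,
      he.one_sub.eq, he.eq, he.one_sub_mul_self, he.mul_one_sub_self, smul_zero, add_zero,
      zero_add]
  map_zero' := by simp
  map_add' x y := by
    simp only [Prod.fst_add, Prod.snd_add, add_smul]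
    abel
  commutes' r := by
    simp [Algebra.algebraMap_eq_smul_one, ← smul_add]

theorem prodAlgHom_apply (he : IsIdempotentElem e) (x : K × K) :
    he.prodAlgHom x = x.1 • 1 + (x.2 - x.1) • e := by
  simp only [prodAlgHom, AlgHom.coe_mk, RingHom.coe_mk, MonoidHom.coe_mk, OneHom.coe_mk,
    smul_sub, sub_smul]
  abel

theorem prodAlgHom_injective [IsDomain K] [Module.IsTorsionFree K R] (he : IsIdempotentElem e)
    (he₀ : e ≠ 0) (he₁ : e ≠ 1) : Function.Injective (he.prodAlgHom (K := K)) := by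
  intro x y hxy
  have h₁ := congrArg (· * (1 - e)) hxy
  have h₂ := congrArg (· * e) hxy
  simp only [prodAlgHom, AlgHom.coe_mk, RingHom.coe_mk, MonoidHom.coe_mk, OneHom.coe_mk,
    add_mul, smul_mul_assoc, he.one_sub.eq, he.eq, he.one_sub_mul_self, he.mul_one_sub_self,
    smul_zero, add_zero, zero_add] at h₁ h₂
  exact Prod.ext (smul_left_injective K (sub_ne_zero.2 he₁.symm) h₁)
    (smul_left_injective K he₀ h₂)

end IsIdempotentElem

section RankOne

variable {K ι : Type*} [Field K] [Fintype ι]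

theorem isIdempotentElem_inv_dotProduct_smul_vecMulVec {u v : ι → K} (h : v ⬝ᵥ u ≠ 0) :
    IsIdempotentElem ((v ⬝ᵥ u)⁻¹ • vecMulVec u v) := by
  rw [IsIdempotentElem, smul_mul_smul_comm, vecMulVec_mul_vecMulVec, vecMulVec_smul, smul_smul,
    mul_assoc, inv_mul_cancel₀ h, mul_one]

theorem trace_inv_dotProduct_smul_vecMulVec {u v : ι → K} (h : v ⬝ᵥ u ≠ 0) :
    trace ((v ⬝ᵥ u)⁻¹ • vecMulVec u v) = 1 := by
  rw [trace_smul, trace_vecMulVec, smul_eq_mul, dotProduct_comm u v, inv_mul_cancel₀ h]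

theorem det_inv_dotProduct_smul_vecMulVec [DecidableEq ι] [Nontrivial ι] (u v : ι → K) :
    det ((v ⬝ᵥ u)⁻¹ • vecMulVec u v) = 0 := by
  rw [det_smul, det_vecMulVec, mul_zero]

end RankOne

section NaturalLift

variable {K ι : Type*} [Field K] [Fintype ι] [DecidableEq ι] {g : Matrix ι ι K} {y : ι → K}

noncomputable def naturalAlgHom (g : Matrix ι ι K) (y : ι → K) (hs : y ⬝ᵥ g *ᵥ y ≠ 0) :
    K × K →ₐ[K] Matrix ι ι K :=
  (isIdempotentElem_inv_dotProduct_smul_vecMulVec hs).prodAlgHom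

theorem naturalAlgHom_apply (hs : y ⬝ᵥ g *ᵥ y ≠ 0) (x : K × K) :
    naturalAlgHom g y hs x =
      x.1 • 1 + ((x.2 - x.1) / (y ⬝ᵥ g *ᵥ y)) • vecMulVec (g *ᵥ y) y := by
  rw [naturalAlgHom, IsIdempotentElem.prodAlgHom_apply, smul_smul, div_eq_mul_inv]

theorem naturalAlgHom_injective [Nontrivial ι] (hs : y ⬝ᵥ g *ᵥ y ≠ 0) :
    Function.Injective (naturalAlgHom g y hs) := by
  refine IsIdempotentElem.prodAlgHom_injective _ (fun h ↦ ?_) (fun h ↦ ?_)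
  · simpa [h] using trace_inv_dotProduct_smul_vecMulVec hs
  · simpa [h] using det_inv_dotProduct_smul_vecMulVec (g *ᵥ y) y

theorem smul_add_smul_vecMulVec_mulVec (hg : g.IsSymm) (hs : y ⬝ᵥ g *ᵥ y ≠ 0) (c d : K) :
    c • g + d • vecMulVec (g *ᵥ y) (g *ᵥ y) =
      naturalAlgHom g y hs (c, c + (y ⬝ᵥ g *ᵥ y) * d) * g := by
  have hyg : y ᵥ* g = g *ᵥ y := by rw [← vecMul_transpose, hg.eq]
  rw [naturalAlgHom_apply, add_mul, smul_mul_assoc, smul_mul_assoc, one_mul, vecMulVec_mul, hyg,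
    add_sub_cancel_left, mul_div_cancel_left₀ d hs]

theorem inv_mul_naturalAlgHom (hg : IsUnit g.det) (hs : y ⬝ᵥ g *ᵥ y ≠ 0) (x : K × K) :
    g⁻¹ * naturalAlgHom g y hs x =
      x.1 • g⁻¹ + ((x.2 - x.1) / (y ⬝ᵥ g *ᵥ y)) • vecMulVec y y := by
  rw [naturalAlgHom_apply, mul_add, Matrix.mul_smul, Matrix.mul_smul, mul_one, mul_vecMulVec,
    mulVec_mulVec, nonsing_inv_mul g hg, one_mulVec]

theorem smul_inv_add_smul_vecMulVec_inj [Nontrivial ι] (hg : IsUnit g.det)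
    (hs : y ⬝ᵥ g *ᵥ y ≠ 0) {p q p' q' : K} :
    p • g⁻¹ + q • vecMulVec y y = p' • g⁻¹ + q' • vecMulVec y y ↔ p = p' ∧ q = q' := by
  refine ⟨fun h ↦ ?_, fun ⟨hp, hq⟩ ↦ hp ▸ hq ▸ rfl⟩
  have key : ∀ p q : K, p • g⁻¹ + q • vecMulVec y y =
      g⁻¹ * naturalAlgHom g y hs (p, p + (y ⬝ᵥ g *ᵥ y) * q) := by
    intro p q
    rw [inv_mul_naturalAlgHom hg, add_sub_cancel_left, mul_div_cancel_left₀ q hs]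
  rw [key, key] at h
  have h' := congrArg (g * ·) h
  simp only [mul_nonsing_inv_cancel_left _ _ hg] at h'
  obtain ⟨rfl, hq⟩ := Prod.mk.inj (naturalAlgHom_injective hs h')
  exact ⟨rfl, mul_left_cancel₀ hs (add_left_cancel hq)⟩

end NaturalLift

theorem fromBlocks_map_mul_fromBlocks_map_eq_one {ι α S : Type*} [Fintype ι] [DecidableEq ι]
    [Ring α] [CommRing S] (φ : S →+* Matrix ι ι α) {u u' : Matrix ι ι α} (hu : u * u' = 1)
    {c₁ c₂ c₃ w : S} (hw : (c₁ * c₂ - c₃ ^ 2) * w = 1) :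
    fromBlocks (φ c₁ * u) (φ c₃ * u) (φ c₃ * u) (φ c₂ * u) *
      fromBlocks (u' * φ (c₂ * w)) (u' * φ (-c₃ * w)) (u' * φ (-c₃ * w)) (u' * φ (c₁ * w)) = 1 := by
  have hφ : ∀ a b, φ a * u * (u' * φ b) = φ (a * b) := fun a b ↦ by
    rw [← mul_assoc, mul_assoc _ u, hu, mul_one, map_mul]
  simp only [fromBlocks_multiply, hφ, ← map_add]
  rw [← fromBlocks_one, ← map_one φ, ← map_zero φ]
  congr 2
  · linear_combination hw
  · ring
  · ring
  · linear_combination hw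

theorem inverse_metric_natural_form_general {n : ℕ} (hn : 2 ≤ n)
    (g : Matrix (Fin n) (Fin n) ℝ) (hg : g.PosDef)
    (y : Fin n → ℝ) (hy : y ≠ 0)
    (a : Fin n → ℝ) (ha : a = g.mulVec y)
    (t : ℝ) (ht : t = (1 / 2) * (y ⬝ᵥ g.mulVec y))
    (c₁ c₂ c₃ d₁ d₂ d₃ : ℝ)
    (h1 : c₁ * c₂ - c₃ ^ 2 ≠ 0)
    (h3 : (c₁ + 2 * d₁ * t) * (c₂ + 2 * d₂ * t) - (c₃ + 2 * d₃ * t) ^ 2 ≠ 0)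
    (G₁ G₂ G₃ : Matrix (Fin n) (Fin n) ℝ)
    (hG₁ : G₁ = c₁ • g + d₁ • vecMulVec a a)
    (hG₂ : G₂ = c₂ • g + d₂ • vecMulVec a a)
    (hG₃ : G₃ = c₃ • g + d₃ • vecMulVec a a) :
    IsUnit (fromBlocks G₁ G₃ G₃ G₂) ∧
    ∃! pq : ℝ × ℝ × ℝ × ℝ × ℝ × ℝ,
      (fromBlocks G₁ G₃ G₃ G₂)⁻¹ =
        fromBlocks
          (pq.1 • g⁻¹ + pq.2.2.2.1 • vecMulVec y y)
          (pq.2.2.1 • g⁻¹ + pq.2.2.2.2.2 • vecMulVec y y)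
          (pq.2.2.1 • g⁻¹ + pq.2.2.2.2.2 • vecMulVec y y)
          (pq.2.1 • g⁻¹ + pq.2.2.2.2.1 • vecMulVec y y) := by
  have : Nontrivial (Fin n) := Fin.nontrivial_iff_two_le.2 hn
  have hdet : IsUnit g.det := (isUnit_iff_isUnit_det g).1 hg.isUnit
  have hsymm : g.IsSymm := isHermitian_iff_isSymm.1 hg.isHermitian
  have hs : y ⬝ᵥ g *ᵥ y ≠ 0 := by simpa using (hg.dotProduct_mulVec_pos hy).ne'
  set s := y ⬝ᵥ g *ᵥ y
  have h3' : (c₁ + s * d₁) * (c₂ + s * d₂) - (c₃ + s * d₃) ^ 2 ≠ 0 := by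
    contrapose! h3
    rw [ht]
    linear_combination h3
  subst ha
  rw [smul_add_smul_vecMulVec_mulVec hsymm hs] at hG₁ hG₂ hG₃
  set C₁ : ℝ × ℝ := (c₁, c₁ + s * d₁)
  set C₂ : ℝ × ℝ := (c₂, c₂ + s * d₂)
  set C₃ : ℝ × ℝ := (c₃, c₃ + s * d₃)
  set w := (C₁ * C₂ - C₃ ^ 2)⁻¹
  have hw : (C₁ * C₂ - C₃ ^ 2) * w = 1 := Prod.ext (mul_inv_cancel₀ h1) (mul_inv_cancel₀ h3')
  have hGH := fromBlocks_map_mul_fromBlocks_map_eq_one (naturalAlgHom g y hs).toRingHom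
    (mul_nonsing_inv g hdet) hw
  simp only [AlgHom.toRingHom_eq_coe, RingHom.coe_coe, ← hG₁, ← hG₂, ← hG₃,
    inv_mul_naturalAlgHom hdet hs] at hGH
  refine ⟨IsUnit.of_mul_eq_one _ hGH, ⟨((C₂ * w).1, (C₁ * w).1, (-C₃ * w).1,
    ((C₂ * w).2 - (C₂ * w).1) / s, ((C₁ * w).2 - (C₁ * w).1) / s,
    ((-C₃ * w).2 - (-C₃ * w).1) / s), inv_eq_right_inv hGH, ?_⟩⟩
  rintro ⟨p₁, p₂, p₃, q₁, q₂, q₃⟩ h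
  simp only [inv_eq_right_inv hGH, fromBlocks_inj, smul_inv_add_smul_vecMulVec_inj hdet hs] at h
  obtain ⟨⟨rfl, rfl⟩, ⟨rfl, rfl⟩, -, ⟨rfl, rfl⟩⟩ := h
  rfl

/-- The block matrix `[[G₁, G₃], [G₃, G₂]]` of the general natural lifted metric
(with `Gα = cα·g + dα·(a·aᵀ)`, `a = g·y`, `y ≠ 0`, `n ≥ 2`) is invertible, and its
inverse has blocks of the same natural form `Hα = pα·g⁻¹ + qα·(y·yᵀ)` for a unique
choice of real numbers `p₁, p₂, p₃, q₁, q₂, q₃`. -/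
theorem inverse_metric_natural_form {n : ℕ} (hn : 2 ≤ n)
    (g : Matrix (Fin n) (Fin n) ℝ) (hg : g.PosDef)
    (y : Fin n → ℝ) (hy : y ≠ 0)
    (a : Fin n → ℝ) (ha : a = g.mulVec y)
    (t : ℝ) (ht : t = (1 / 2) * (y ⬝ᵥ g.mulVec y))
    (c₁ c₂ c₃ d₁ d₂ d₃ : ℝ)
    (h1 : c₁ * c₂ - c₃ ^ 2 ≠ 0) (h2 : c₂ + 2 * d₂ * t ≠ 0)
    (h3 : (c₁ + 2 * d₁ * t) * (c₂ + 2 * d₂ * t) - (c₃ + 2 * d₃ * t) ^ 2 ≠ 0)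
    (G₁ G₂ G₃ : Matrix (Fin n) (Fin n) ℝ)
    (hG₁ : G₁ = c₁ • g + d₁ • vecMulVec a a)
    (hG₂ : G₂ = c₂ • g + d₂ • vecMulVec a a)
    (hG₃ : G₃ = c₃ • g + d₃ • vecMulVec a a) :
    IsUnit (fromBlocks G₁ G₃ G₃ G₂) ∧
    ∃! pq : ℝ × ℝ × ℝ × ℝ × ℝ × ℝ,
      (fromBlocks G₁ G₃ G₃ G₂)⁻¹ =
        fromBlocks
          (pq.1 • g⁻¹ + pq.2.2.2.1 • vecMulVec y y)
          (pq.2.2.1 • g⁻¹ + pq.2.2.2.2.2 • vecMulVec y y)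
          (pq.2.2.1 • g⁻¹ + pq.2.2.2.2.2 • vecMulVec y y)
          (pq.2.1 • g⁻¹ + pq.2.2.2.2.1 • vecMulVec y y) :=
  inverse_metric_natural_form_general hn g hg y hy a ha t ht c₁ c₂ c₃ d₁ d₂ d₃ h1 h3 G₁ G₂ G₃ hG₁
    hG₂ hG₃
end
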